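/- Let Z* ∈ ℝ^{n×N} satisfy Z* Z*ᵀ = Id. There exists a constant C > 0 (depending only on dimensions) such that for every Δ ∈ ℝ^{n×N} with spectral norm ‖Δ‖₂ ≤ 1/2, setting A := Z* (Z* + Δ)ᵀ (which is invertible), one has ‖A⁻¹ (A Aᵀ)^{1/2} − Id − (1/2)(Δ Z*ᵀ − Z* Δᵀ)‖_F ≤ C ‖Δ‖_F². Equivalently, the orthogonal polar factor V Uᵀ of any full SVD A = U Σ Vᵀ equals Id + (1/2)(Δ Z*ᵀ − Z* Δᵀ) up to an error of Frobenius norm at most C ‖Δ‖_F². -/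

import Mathlib

open scoped BigOperators
open Matrix

/-- Frobenius norm of a real matrix. -/
noncomputable def frobNorm {m n : ℕ} (A : Matrix (Fin m) (Fin n) ℝ) : ℝ :=
  Real.sqrt (∑ i, ∑ j, (A i j) ^ 2)

/-- Spectral (largest singular value / ℓ2-operator) norm of a real matrix. -/
noncomputable def specNorm {m n : ℕ} (A : Matrix (Fin m) (Fin n) ℝ) : ℝ :=
  ‖LinearMap.toContinuousLinearMap (Matrix.toEuclideanLin A)‖

/-- Euclidean (ℓ2) norm of a vector. -/
noncomputable def vecNorm {n : ℕ} (v : Fin n → ℝ) : ℝ :=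
  Real.sqrt (∑ i, v i ^ 2)

/-- β(z): the smallest nonzero magnitude among the entries of `z`
(defined as `sInf` of the set of nonzero magnitudes; `0` if `z = 0`). -/
noncomputable def beta {n : ℕ} (z : Fin n → ℝ) : ℝ :=
  sInf {r : ℝ | ∃ i, z i ≠ 0 ∧ r = |z i|}

/-- `z` is an output of the hard-thresholding operator `H_s` applied to `y`:
there is a set `T` of `min s n` indices carrying largest-magnitude entries of `y`,
such that `z` agrees with `y` on `T` and vanishes off `T`. -/
def IsHardThreshold {n : ℕ} (s : ℕ) (y z : Fin n → ℝ) : Prop :=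
  ∃ T : Finset (Fin n), T.card = min s n ∧ (∀ i ∈ T, z i = y i) ∧ (∀ i ∉ T, z i = 0) ∧
    ∀ i ∈ T, ∀ j ∉ T, |y j| ≤ |y i|

/-- `A = U * S * Vᵀ` is a full singular value decomposition of `A`:
`U, V` orthogonal and `S` diagonal with nonnegative entries. -/
def IsFullSVD {n : ℕ} (A U S V : Matrix (Fin n) (Fin n) ℝ) : Prop :=
  Uᵀ * U = 1 ∧ Vᵀ * V = 1 ∧ (∀ i j, i ≠ j → S i j = 0) ∧ (∀ i, 0 ≤ S i i) ∧ A = U * S * Vᵀ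

/-- `W = V * Uᵀ` for some full SVD `A = U * S * Vᵀ`. -/
def IsPolarFromSVD {n : ℕ} (A W : Matrix (Fin n) (Fin n) ℝ) : Prop :=
  ∃ U S V, IsFullSVD A U S V ∧ W = V * Uᵀ

/-- `D_k`: the n×n diagonal matrix of ones with a zero at entry (k,k). -/
noncomputable def Dmat {n : ℕ} (k : Fin n) : Matrix (Fin n) (Fin n) ℝ :=
  Matrix.diagonal (fun i => if i = k then 0 else 1)

-- `D̃_k`: the N×N diagonal matrix with ones at the support of the k-th row of `Zs`.
open Classical in
noncomputable def Dtil {n N : ℕ} (Zs : Matrix (Fin n) (Fin N) ℝ) (k : Fin n) :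
    Matrix (Fin N) (Fin N) ℝ :=
  Matrix.diagonal (fun i => if Zs k i ≠ 0 then 1 else 0)

/-- `q = max_{1 ≤ k ≤ n} ‖D_k Z* D̃_k‖₂`. -/
noncomputable def qZero {n N : ℕ} (Zs : Matrix (Fin n) (Fin N) ℝ) : ℝ :=
  ⨆ k, specNorm (Dmat k * Zs * Dtil Zs k)

/-- Smallest singular value of an n×N matrix: `min_{‖x‖=1, x ∈ ℝⁿ} ‖Aᵀ x‖`. -/
noncomputable def sigmaMin {n N : ℕ} (A : Matrix (Fin n) (Fin N) ℝ) : ℝ :=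
  sInf {r : ℝ | ∃ x : EuclideanSpace ℝ (Fin n), ‖x‖ = 1 ∧ r = ‖Matrix.toEuclideanLin Aᵀ x‖}

/-- Condition number κ(A): ratio of largest to smallest singular value. -/
noncomputable def condNumber {n N : ℕ} (A : Matrix (Fin n) (Fin N) ℝ) : ℝ :=
  specNorm A / sigmaMin A

/-- `q = κ⁴(Z*) · max_{1 ≤ k ≤ n} ‖D_k Z* Z*ᵀ Z* D̃_k‖₂`. -/
noncomputable def qGen {n N : ℕ} (Zs : Matrix (Fin n) (Fin N) ℝ) : ℝ :=
  condNumber Zs ^ 4 * ⨆ k, specNorm (Dmat k * Zs * Zsᵀ * Zs * Dtil Zs k)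

/-!
Write `E = Z* Δᵀ`, so that `A = 1 + E` with `‖E‖₂ ≤ 1/2`, and let `S` be a positive semidefinite
square root of `A Aᵀ = 1 + E + Eᵀ + E Eᵀ`. Since `(1 + S)(S - 1) = S² - 1` and `1 + S` does not
shrink vectors, `S - 1` is of first order in `E`, in both norms. The identity
`A · 2 (A⁻¹ S - 1 - ½ (Eᵀ - E)) = E² - (S - 1)²` then shows that the remainder is `A⁻¹` applied to
a quadratic expression, and `‖A⁻¹‖₂ ≤ 2`. For a full SVD `A = U Σ Vᵀ`, `V Uᵀ = A⁻¹ (U Σ Uᵀ)` with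
`U Σ Uᵀ` such a square root, so the second claim reduces to the first.
-/

section Spectral

open scoped Matrix.Norms.L2Operator

variable {m n k : ℕ}

lemma specNorm_nonneg (A : Matrix (Fin m) (Fin n) ℝ) : 0 ≤ specNorm A := norm_nonneg _

lemma norm_toEuclideanLin_le_specNorm_mul (A : Matrix (Fin m) (Fin n) ℝ)
    (x : EuclideanSpace ℝ (Fin n)) : ‖toEuclideanLin A x‖ ≤ specNorm A * ‖x‖ :=
  (LinearMap.toContinuousLinearMap (toEuclideanLin A)).le_opNorm x

lemma specNorm_le_bound {A : Matrix (Fin m) (Fin n) ℝ} {c : ℝ} (hc : 0 ≤ c)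
    (h : ∀ x, ‖toEuclideanLin A x‖ ≤ c * ‖x‖) : specNorm A ≤ c :=
  ContinuousLinearMap.opNorm_le_bound _ hc h

lemma specNorm_mul_le (A : Matrix (Fin m) (Fin n) ℝ) (B : Matrix (Fin n) (Fin k) ℝ) :
    specNorm (A * B) ≤ specNorm A * specNorm B :=
  l2_opNorm_mul A B

lemma specNorm_mul_le_of_specNorm_le_one {Z : Matrix (Fin m) (Fin n) ℝ} (hZ : specNorm Z ≤ 1)
    (B : Matrix (Fin n) (Fin k) ℝ) : specNorm (Z * B) ≤ specNorm B :=
  (specNorm_mul_le Z B).trans (mul_le_of_le_one_left (specNorm_nonneg B) hZ)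

lemma specNorm_add_le (A B : Matrix (Fin m) (Fin n) ℝ) :
    specNorm (A + B) ≤ specNorm A + specNorm B :=
  norm_add_le A B

lemma specNorm_transpose (A : Matrix (Fin m) (Fin n) ℝ) : specNorm Aᵀ = specNorm A := by
  rw [← conjTranspose_eq_transpose_of_trivial]
  exact l2_opNorm_conjTranspose A

lemma specNorm_one_le : specNorm (1 : Matrix (Fin n) (Fin n) ℝ) ≤ 1 :=
  specNorm_le_bound zero_le_one fun x => by simp

lemma specNorm_le_one_of_mul_transpose_eq_one {Z : Matrix (Fin m) (Fin n) ℝ}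
    (hZ : Z * Zᵀ = 1) : specNorm Z ≤ 1 := by
  have h : specNorm Z * specNorm Z ≤ 1 := by
    rw [← specNorm_transpose Z]
    calc specNorm Zᵀ * specNorm Zᵀ = specNorm (Z * Zᵀ) := by
          have h := l2_opNorm_conjTranspose_mul_self Zᵀ
          rw [conjTranspose_eq_transpose_of_trivial, transpose_transpose] at h
          exact h.symm
      _ ≤ 1 := hZ ▸ specNorm_one_le
  nlinarith [specNorm_nonneg Z]

lemma isUnit_one_add_of_specNorm_lt_one {E : Matrix (Fin n) (Fin n) ℝ} (hE : specNorm E < 1) :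
    IsUnit (1 + E) := by
  simpa only [sub_neg_eq_add] using isUnit_one_sub_of_norm_lt_one (x := -E) (by rwa [norm_neg])

lemma specNorm_le_mul_specNorm_mul_of_bounded_below {T : Matrix (Fin m) (Fin n) ℝ} {c : ℝ}
    (hc : 0 ≤ c) (hT : ∀ x, ‖x‖ ≤ c * ‖toEuclideanLin T x‖) (M : Matrix (Fin n) (Fin k) ℝ) :
    specNorm M ≤ c * specNorm (T * M) :=
  specNorm_le_bound (mul_nonneg hc (specNorm_nonneg _)) fun x =>
    calc ‖toEuclideanLin M x‖ ≤ c * ‖toEuclideanLin T (toEuclideanLin M x)‖ := hT _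
      _ = c * ‖toEuclideanLin (T * M) x‖ := by simp only [toLpLin_mul_same, LinearMap.comp_apply]
      _ ≤ c * (specNorm (T * M) * ‖x‖) := by gcongr; exact norm_toEuclideanLin_le_specNorm_mul _ _
      _ = c * specNorm (T * M) * ‖x‖ := by ring

end Spectral

section Frobenius

open scoped Matrix.Norms.Frobenius

variable {m m' n k : ℕ}

lemma frobNorm_eq_norm (A : Matrix (Fin m) (Fin n) ℝ) : frobNorm A = ‖A‖ := by
  rw [frobNorm, frobenius_norm_def, Real.sqrt_eq_rpow]
  simp [Real.norm_eq_abs, sq_abs]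

lemma frobNorm_nonneg (A : Matrix (Fin m) (Fin n) ℝ) : 0 ≤ frobNorm A := Real.sqrt_nonneg _

lemma frobNorm_add_le (A B : Matrix (Fin m) (Fin n) ℝ) :
    frobNorm (A + B) ≤ frobNorm A + frobNorm B := by
  simpa only [frobNorm_eq_norm] using norm_add_le A B

lemma frobNorm_sub_le (A B : Matrix (Fin m) (Fin n) ℝ) :
    frobNorm (A - B) ≤ frobNorm A + frobNorm B := by
  simpa only [frobNorm_eq_norm] using norm_sub_le A B

lemma frobNorm_smul (c : ℝ) (A : Matrix (Fin m) (Fin n) ℝ) :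
    frobNorm (c • A) = |c| * frobNorm A := by
  simp only [frobNorm_eq_norm, norm_smul, Real.norm_eq_abs]

lemma frobNorm_transpose (A : Matrix (Fin m) (Fin n) ℝ) : frobNorm Aᵀ = frobNorm A := by
  simp only [frobNorm_eq_norm, frobenius_norm_transpose]

lemma norm_toEuclideanLin_le_frobNorm_mul (A : Matrix (Fin m) (Fin n) ℝ)
    (x : EuclideanSpace ℝ (Fin n)) : ‖toEuclideanLin A x‖ ≤ frobNorm A * ‖x‖ := by
  have h := frobenius_norm_mul A (replicateCol Unit x.ofLp)
  rw [← replicateCol_mulVec, frobenius_norm_replicateCol, frobenius_norm_replicateCol] at h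
  simpa [frobNorm_eq_norm, toLpLin_apply] using h

lemma specNorm_le_frobNorm (A : Matrix (Fin m) (Fin n) ℝ) : specNorm A ≤ frobNorm A :=
  specNorm_le_bound (frobNorm_nonneg A) (norm_toEuclideanLin_le_frobNorm_mul A)

lemma frobNorm_sq_eq_sum_col (A : Matrix (Fin m) (Fin k) ℝ) :
    frobNorm A ^ 2 = ∑ j, ‖(WithLp.toLp 2 (Aᵀ j) : EuclideanSpace ℝ (Fin m))‖ ^ 2 := by
  rw [frobNorm, Real.sq_sqrt (by positivity), Finset.sum_comm]
  simp [EuclideanSpace.norm_sq_eq]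

lemma frobNorm_le_of_col_le {M : Matrix (Fin m) (Fin k) ℝ} {M' : Matrix (Fin m') (Fin k) ℝ}
    {c : ℝ} (hc : 0 ≤ c)
    (h : ∀ j, ‖(WithLp.toLp 2 (Mᵀ j) : EuclideanSpace ℝ (Fin m))‖ ≤
      c * ‖(WithLp.toLp 2 (M'ᵀ j) : EuclideanSpace ℝ (Fin m'))‖) :
    frobNorm M ≤ c * frobNorm M' := by
  refine (pow_le_pow_iff_left₀ (frobNorm_nonneg M) (mul_nonneg hc (frobNorm_nonneg M'))
    two_ne_zero).mp ?_
  rw [mul_pow, frobNorm_sq_eq_sum_col, frobNorm_sq_eq_sum_col, Finset.mul_sum]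
  gcongr with j
  rw [← mul_pow]
  exact pow_le_pow_left₀ (norm_nonneg _) (h j) 2

lemma toEuclideanLin_col_eq_col_mul (A : Matrix (Fin m) (Fin n) ℝ) (B : Matrix (Fin n) (Fin k) ℝ) (j : Fin k) :
    toEuclideanLin A (WithLp.toLp 2 (Bᵀ j)) = WithLp.toLp 2 ((A * B)ᵀ j) := by
  ext i
  simp [toLpLin_toLp, mulVec, dotProduct, mul_apply]

lemma frobNorm_mul_le (A : Matrix (Fin m) (Fin n) ℝ) (B : Matrix (Fin n) (Fin k) ℝ) :
    frobNorm (A * B) ≤ specNorm A * frobNorm B :=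
  frobNorm_le_of_col_le (specNorm_nonneg A) fun j =>
    toEuclideanLin_col_eq_col_mul A B j ▸ norm_toEuclideanLin_le_specNorm_mul A _

lemma frobNorm_mul_le_of_specNorm_le_one {Z : Matrix (Fin m) (Fin n) ℝ} (hZ : specNorm Z ≤ 1)
    (B : Matrix (Fin n) (Fin k) ℝ) : frobNorm (Z * B) ≤ frobNorm B :=
  (frobNorm_mul_le Z B).trans (mul_le_of_le_one_left (frobNorm_nonneg B) hZ)

lemma frobNorm_le_mul_frobNorm_mul_of_bounded_below {T : Matrix (Fin m) (Fin n) ℝ} {c : ℝ}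
    (hc : 0 ≤ c) (hT : ∀ x, ‖x‖ ≤ c * ‖toEuclideanLin T x‖) (M : Matrix (Fin n) (Fin k) ℝ) :
    frobNorm M ≤ c * frobNorm (T * M) :=
  frobNorm_le_of_col_le hc fun j => toEuclideanLin_col_eq_col_mul T M j ▸ hT _

end Frobenius

section Perturbation

open scoped RealInnerProductSpace

variable {n : ℕ}

lemma toEuclideanLin_one_add_apply (E : Matrix (Fin n) (Fin n) ℝ) (x : EuclideanSpace ℝ (Fin n)) :
    toEuclideanLin (1 + E) x = x + toEuclideanLin E x := by
  simp only [map_add, toLpLin_one, LinearMap.add_apply, LinearMap.id_apply]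

lemma norm_le_norm_toEuclideanLin_one_add_of_posSemidef {S : Matrix (Fin n) (Fin n) ℝ}
    (hS : S.PosSemidef) (x : EuclideanSpace ℝ (Fin n)) :
    ‖x‖ ≤ ‖toEuclideanLin (1 + S) x‖ := by
  have hx : 0 ≤ ⟪x, toEuclideanLin S x⟫ := by
    simpa [real_inner_comm] using (isPositive_toEuclideanLin_iff.mpr hS).2 x
  refine (pow_le_pow_iff_left₀ (norm_nonneg _) (norm_nonneg _) two_ne_zero).mp ?_
  rw [toEuclideanLin_one_add_apply, norm_add_sq_real]
  nlinarith [sq_nonneg ‖toEuclideanLin S x‖]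

lemma one_sub_specNorm_mul_norm_le (E : Matrix (Fin n) (Fin n) ℝ) (x : EuclideanSpace ℝ (Fin n)) :
    (1 - specNorm E) * ‖x‖ ≤ ‖toEuclideanLin (1 + E) x‖ := by
  have h := norm_sub_norm_le x (-toEuclideanLin E x)
  rw [sub_neg_eq_add, norm_neg, ← toEuclideanLin_one_add_apply] at h
  nlinarith [norm_toEuclideanLin_le_specNorm_mul E x]

end Perturbation

section PolarFactor

variable {n : ℕ}

lemma one_add_mul_sub_one (S : Matrix (Fin n) (Fin n) ℝ) : (1 + S) * (S - 1) = S * S - 1 := by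
  noncomm_ring

lemma specNorm_sub_one_le_of_posSemidef {S : Matrix (Fin n) (Fin n) ℝ} (hS : S.PosSemidef) :
    specNorm (S - 1) ≤ specNorm (S * S - 1) := by
  have h := specNorm_le_mul_specNorm_mul_of_bounded_below zero_le_one
    (fun x => by simpa only [one_mul] using norm_le_norm_toEuclideanLin_one_add_of_posSemidef hS x)
    (S - 1)
  rwa [one_mul, one_add_mul_sub_one] at h

lemma frobNorm_sub_one_le_of_posSemidef {S : Matrix (Fin n) (Fin n) ℝ} (hS : S.PosSemidef) :
    frobNorm (S - 1) ≤ frobNorm (S * S - 1) := by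
  have h := frobNorm_le_mul_frobNorm_mul_of_bounded_below zero_le_one
    (fun x => by simpa only [one_mul] using norm_le_norm_toEuclideanLin_one_add_of_posSemidef hS x)
    (S - 1)
  rwa [one_mul, one_add_mul_sub_one] at h

lemma one_add_mul_polar_remainder {E S : Matrix (Fin n) (Fin n) ℝ} (hE : IsUnit (1 + E))
    (hS : S * S = (1 + E) * (1 + E)ᵀ) :
    (1 + E) * ((2 : ℝ) • ((1 + E)⁻¹ * S - 1 - (1/2 : ℝ) • (Eᵀ - E))) =
      E * E - (S - 1) * (S - 1) := by
  have hinv : (1 + E) * (1 + E)⁻¹ = 1 := mul_nonsing_inv _ ((isUnit_iff_isUnit_det _).mp hE)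
  have hsq : (S - 1) * (S - 1) = S * S - 2 • S + 1 := by noncomm_ring
  rw [hsq, hS, Matrix.mul_smul, Matrix.mul_sub, Matrix.mul_sub, ← Matrix.mul_assoc, hinv,
    transpose_add, transpose_one]
  simp only [Matrix.mul_smul, Matrix.mul_sub, Matrix.add_mul, Matrix.mul_add, one_mul, mul_one]
  module

lemma frobNorm_polar_remainder_le {E S : Matrix (Fin n) (Fin n) ℝ} (hE : specNorm E ≤ 1/2)
    (hS : S.PosSemidef) (hSS : S * S = (1 + E) * (1 + E)ᵀ) :
    frobNorm ((1 + E)⁻¹ * S - 1 - (1/2 : ℝ) • (Eᵀ - E)) ≤ 8 * (specNorm E * frobNorm E) := by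
  have he := specNorm_nonneg E
  have hf := frobNorm_nonneg E
  have hsq : S * S - 1 = E + Eᵀ + E * Eᵀ := by
    rw [hSS, transpose_add, transpose_one]
    noncomm_ring
  have hH_spec : specNorm (S - 1) ≤ 5/2 * specNorm E :=
    calc specNorm (S - 1) ≤ specNorm (E + Eᵀ + E * Eᵀ) := hsq ▸ specNorm_sub_one_le_of_posSemidef hS
      _ ≤ specNorm E + specNorm E + specNorm E * specNorm E := by
        grw [specNorm_add_le, specNorm_add_le, specNorm_mul_le, specNorm_transpose]
      _ ≤ 5/2 * specNorm E := by nlinarith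
  have hH_frob : frobNorm (S - 1) ≤ 5/2 * frobNorm E :=
    calc frobNorm (S - 1) ≤ frobNorm (E + Eᵀ + E * Eᵀ) := hsq ▸ frobNorm_sub_one_le_of_posSemidef hS
      _ ≤ frobNorm E + frobNorm E + specNorm E * frobNorm E := by
        grw [frobNorm_add_le, frobNorm_add_le, frobNorm_mul_le, frobNorm_transpose]
      _ ≤ 5/2 * frobNorm E := by nlinarith
  have hrem : frobNorm (E * E - (S - 1) * (S - 1)) ≤ 29/4 * (specNorm E * frobNorm E) :=
    calc frobNorm (E * E - (S - 1) * (S - 1))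
        ≤ specNorm E * frobNorm E + specNorm (S - 1) * frobNorm (S - 1) := by
          grw [frobNorm_sub_le, frobNorm_mul_le, frobNorm_mul_le]
      _ ≤ specNorm E * frobNorm E + (5/2 * specNorm E) * (5/2 * frobNorm E) := by
          gcongr
          exact frobNorm_nonneg _
      _ = 29/4 * (specNorm E * frobNorm E) := by ring
  have hunit : IsUnit (1 + E) := isUnit_one_add_of_specNorm_lt_one (by linarith)
  -- `‖(1 + E) x‖ ≥ ‖x‖ / 2`, so multiplying by `1 + E` loses at most a factor `2`
  have htwice := frobNorm_le_mul_frobNorm_mul_of_bounded_below zero_le_two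
    (fun x => by nlinarith [one_sub_specNorm_mul_norm_le E x, norm_nonneg x])
    ((2 : ℝ) • ((1 + E)⁻¹ * S - 1 - (1/2 : ℝ) • (Eᵀ - E)))
  rw [one_add_mul_polar_remainder hunit hSS, frobNorm_smul, abs_two] at htwice
  nlinarith [mul_nonneg he hf]

end PolarFactor

section SVD

variable {n : ℕ} {A U S V : Matrix (Fin n) (Fin n) ℝ}

lemma IsFullSVD.eq_diagonal (h : IsFullSVD A U S V) : S = diagonal fun i => S i i := by
  ext i j
  by_cases hij : i = j
  · subst hij
    simp
  · simp [hij, h.2.2.1 i j hij]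

lemma IsFullSVD.posSemidef (h : IsFullSVD A U S V) : (U * S * Uᵀ).PosSemidef := by
  rw [h.eq_diagonal, ← conjTranspose_eq_transpose_of_trivial]
  exact (posSemidef_diagonal_iff.mpr h.2.2.2.1).mul_mul_conjTranspose_same U

lemma IsFullSVD.mul_self (h : IsFullSVD A U S V) :
    (U * S * Uᵀ) * (U * S * Uᵀ) = A * Aᵀ := by
  have hS : Sᵀ = S := by rw [h.eq_diagonal, diagonal_transpose, ← h.eq_diagonal]
  obtain ⟨hU, hV, -, -, rfl⟩ := h
  calc U * S * Uᵀ * (U * S * Uᵀ) = U * S * (Uᵀ * U) * S * Uᵀ := by noncomm_ring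
    _ = U * S * Vᵀ * (U * S * Vᵀ)ᵀ := by
      rw [transpose_mul, transpose_mul, transpose_transpose, hS, hU,
        show U * S * Vᵀ * (V * (S * Uᵀ)) = U * S * (Vᵀ * V) * S * Uᵀ by noncomm_ring, hV]

lemma IsFullSVD.mul_polar (h : IsFullSVD A U S V) : A * (V * Uᵀ) = U * S * Uᵀ := by
  obtain ⟨-, hV, -, -, rfl⟩ := h
  calc U * S * Vᵀ * (V * Uᵀ) = U * S * (Vᵀ * V) * Uᵀ := by noncomm_ring
    _ = U * S * Uᵀ := by rw [hV, mul_one]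

lemma IsFullSVD.polar_eq_inv_mul (h : IsFullSVD A U S V) (hA : IsUnit A) :
    V * Uᵀ = A⁻¹ * (U * S * Uᵀ) := by
  rw [← h.mul_polar, ← Matrix.mul_assoc, nonsing_inv_mul _ ((isUnit_iff_isUnit_det _).mp hA),
    one_mul]

end SVD

/-- first-order expansion of the orthogonal polar factor of
`A = Z* (Z* + Δ)ᵀ` around the identity: `A⁻¹ (A Aᵀ)^{1/2} ≈ Id + (1/2)(Δ Z*ᵀ − Z* Δᵀ)`. -/
theorem stmt10
    {n N : ℕ} (Zs : Matrix (Fin n) (Fin N) ℝ)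
    (hZ : Zs * Zsᵀ = 1) :
    ∃ C : ℝ, 0 < C ∧ ∀ Δ : Matrix (Fin n) (Fin N) ℝ, specNorm Δ ≤ 1/2 →
      IsUnit (Zs * (Zs + Δ)ᵀ) ∧
      (∀ S : Matrix (Fin n) (Fin n) ℝ, S.PosSemidef →
        S * S = (Zs * (Zs + Δ)ᵀ) * (Zs * (Zs + Δ)ᵀ)ᵀ →
        frobNorm ((Zs * (Zs + Δ)ᵀ)⁻¹ * S - 1 - (1/2 : ℝ) • (Δ * Zsᵀ - Zs * Δᵀ)) ≤
          C * frobNorm Δ ^ 2) ∧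
      (∀ U S V : Matrix (Fin n) (Fin n) ℝ, IsFullSVD (Zs * (Zs + Δ)ᵀ) U S V →
        frobNorm (V * Uᵀ - 1 - (1/2 : ℝ) • (Δ * Zsᵀ - Zs * Δᵀ)) ≤
          C * frobNorm Δ ^ 2) := by
  refine ⟨8, by norm_num, fun Δ hΔ => ?_⟩
  set E := Zs * Δᵀ with hE
  have hA : Zs * (Zs + Δ)ᵀ = 1 + E := by rw [transpose_add, Matrix.mul_add, hZ]
  have hEt : Δ * Zsᵀ = Eᵀ := by rw [hE, transpose_mul, transpose_transpose]
  have hZs := specNorm_le_one_of_mul_transpose_eq_one hZ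
  have hE_spec : specNorm E ≤ specNorm Δ :=
    specNorm_transpose Δ ▸ specNorm_mul_le_of_specNorm_le_one hZs Δᵀ
  have hE_frob : frobNorm E ≤ frobNorm Δ :=
    frobNorm_transpose Δ ▸ frobNorm_mul_le_of_specNorm_le_one hZs Δᵀ
  have hunit : IsUnit (Zs * (Zs + Δ)ᵀ) := hA ▸ isUnit_one_add_of_specNorm_lt_one (by linarith)
  have hsqrt : ∀ S : Matrix (Fin n) (Fin n) ℝ, S.PosSemidef →
      S * S = (Zs * (Zs + Δ)ᵀ) * (Zs * (Zs + Δ)ᵀ)ᵀ →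
      frobNorm ((Zs * (Zs + Δ)ᵀ)⁻¹ * S - 1 - (1/2 : ℝ) • (Δ * Zsᵀ - Zs * Δᵀ)) ≤
        8 * frobNorm Δ ^ 2 := by
    intro S hS hSS
    rw [hA] at hSS
    rw [hA, hEt]
    calc _ ≤ 8 * (specNorm E * frobNorm E) := frobNorm_polar_remainder_le (by linarith) hS hSS
      _ ≤ 8 * (frobNorm Δ * frobNorm Δ) := by
        gcongr 8 * ?_
        exact mul_le_mul (hE_spec.trans (specNorm_le_frobNorm Δ)) hE_frob (frobNorm_nonneg E)
          (frobNorm_nonneg Δ)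
      _ = 8 * frobNorm Δ ^ 2 := by ring
  refine ⟨hunit, hsqrt, fun U S V hsvd => ?_⟩
  rw [hsvd.polar_eq_inv_mul hunit]
  exact hsqrt _ hsvd.posSemidef hsvd.mul_self
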